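/- Let G be a finite tree rooted at o, and suppose o is a δ-center of mass witnessed by subtrees T, T̃ with V(T) ∩ V(T̃) = {o}. Let A be the smallest constant such that the Hardy inequalities ∑_{v∈V(T)}(∑_{e∈ℓ(v)} g(e))² ≤ A ∑_{e∈E(T)} g(e)² and the analogous inequality on T̃ hold for all nonzero g. Then the spectral gap λ of the continuous-time simple random walk on G (each edge at rate 1, uniform stationary distribution) satisfies 1/A ≤ λ ≤ 1/(δA). -/

import Mathlib

open Finset

/-- Edges on the path from `o` to `v` in a tree, encoded by their endpoints farther
from `o`: the vertices `u ≠ o` lying on the path from `o` to `v`. -/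
noncomputable def pathE {V : Type*} [Fintype V] [DecidableEq V] (G : SimpleGraph V) (o v : V) :
    Finset V :=
  Finset.univ.filter fun u => u ≠ o ∧ G.dist o u + G.dist u v = G.dist o v

/-- The Dirichlet form `E(f) = (1/|V|) ∑_{e ∈ E} (f(e₊) - f(e₋))²` of the
continuous-time simple random walk (each edge at rate 1). -/
noncomputable def dirichletForm {V : Type*} [Fintype V] (G : SimpleGraph V)
    [DecidableRel G.Adj] (f : V → ℝ) : ℝ :=
  (∑ x : V, ∑ y ∈ G.neighborFinset x, (f x - f y) ^ 2) / (2 * Fintype.card V)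

/-- The variance `Var(f) = (1/|V|) ∑_v f(v)² - ((1/|V|) ∑_v f(v))²` with respect to
the uniform distribution on `V`. -/
noncomputable def uniformVar {V : Type*} [Fintype V] (f : V → ℝ) : ℝ :=
  (∑ v : V, f v ^ 2) / Fintype.card V - ((∑ v : V, f v) / Fintype.card V) ^ 2

/-!
Root the tree at `o` and encode an edge by its endpoint farther from `o`. Then the increments
`g u = f u - f (parent u)` telescope along the path from `o` to `v` to `f v - f o`, and the
Dirichlet form is `∑_{u ≠ o} g u ^ 2 / |V|`.

Lower bound: `|V| Var f ≤ ∑_v (f v - f o) ^ 2`; split the sum over `T` and `T'` (the term at `o`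
vanishes) and apply the two Hardy inequalities to the increments, getting `Var f ≤ A E(f)`.

Upper bound: for `g` on the edges of `T`, the path sums `f v = ∑_{u ∈ ℓ(v)} g u` (taken as `0` on
`T'`) satisfy `|V| E(f) = ∑ g ^ 2`, and since `f` vanishes on `T'`, which carries a `δ`-fraction of
the vertices, Cauchy–Schwarz gives `|V| Var f ≥ δ ∑ f ^ 2`. So the Poincaré inequality
`λ Var ≤ E` yields the Hardy inequality on `T` (and symmetrically on `T'`) with constant
`1 / (δ λ)`, whence `A ≤ 1 / (δ λ)`.
-/

theorem Finset.sum_eq_add_of_inter_eq_singleton {V M : Type*} [Fintype V] [DecidableEq V]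
    [AddCommMonoid M] {s t : Finset V} {o : V} (hint : s ∩ t = {o}) (huni : s ∪ t = univ)
    {φ : V → M} (h0 : φ o = 0) : ∑ v, φ v = ∑ v ∈ s, φ v + ∑ v ∈ t, φ v := by
  rw [← sum_union_inter, huni, hint, sum_singleton, h0, add_zero]

theorem Finset.sum_filter_ne_eq_add_of_inter_eq_singleton {V M : Type*} [Fintype V]
    [DecidableEq V] [AddCommMonoid M] {s t : Finset V} {o : V} (hint : s ∩ t = {o})
    (huni : s ∪ t = univ) (φ : V → M) :
    ∑ v ∈ univ.filter (· ≠ o), φ v =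
      ∑ v ∈ s.filter (· ≠ o), φ v + ∑ v ∈ t.filter (· ≠ o), φ v := by
  simp only [sum_filter]
  exact sum_eq_add_of_inter_eq_singleton hint huni (by simp)

section UniformVar

variable {V : Type*} [Fintype V] [Nonempty V]

theorem card_mul_uniformVar (f : V → ℝ) :
    Fintype.card V * uniformVar f = ∑ v, f v ^ 2 - (∑ v, f v) ^ 2 / Fintype.card V := by
  have : (Fintype.card V : ℝ) ≠ 0 := by positivity
  rw [uniformVar]
  field_simp

theorem uniformVar_nonneg (f : V → ℝ) : 0 ≤ uniformVar f := by
  have hn : (0 : ℝ) < Fintype.card V := by positivity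
  have hCS := sq_sum_le_card_mul_sum_sq (s := univ) (f := f)
  rw [card_univ] at hCS
  have : 0 ≤ Fintype.card V * uniformVar f := by
    rw [card_mul_uniformVar, sub_nonneg, div_le_iff₀ hn]
    linarith
  exact nonneg_of_mul_nonneg_right this hn

theorem card_mul_uniformVar_le_sum_sq_sub (f : V → ℝ) (c : ℝ) :
    Fintype.card V * uniformVar f ≤ ∑ v, (f v - c) ^ 2 := by
  have hexp : ∑ v, (f v - c) ^ 2 =
      ∑ v, f v ^ 2 - 2 * c * ∑ v, f v + Fintype.card V * c ^ 2 := by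
    have hsq : ∀ v, (f v - c) ^ 2 = f v ^ 2 - 2 * c * f v + c ^ 2 := fun v => by ring
    simp only [hsq, sum_add_distrib, sum_sub_distrib, ← mul_sum, sum_const, card_univ,
      nsmul_eq_mul]
  rw [card_mul_uniformVar, hexp]
  have hnonneg : 0 ≤ (∑ v, f v - Fintype.card V * c) ^ 2 / Fintype.card V := by positivity
  have hsq : (∑ v, f v - Fintype.card V * c) ^ 2 / Fintype.card V =
      (∑ v, f v) ^ 2 / Fintype.card V - 2 * c * ∑ v, f v + Fintype.card V * c ^ 2 := by
    field_simp
    ring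
  linarith

theorem card_mul_sum_sq_le_card_sq_mul_uniformVar [DecidableEq V] {f : V → ℝ} {t : Finset V}
    (ht : ∀ v ∈ t, f v = 0) :
    #t * ∑ v, f v ^ 2 ≤ Fintype.card V ^ 2 * uniformVar f := by
  have hsum : ∑ v, f v = ∑ v ∈ tᶜ, f v := by
    rw [← sum_add_sum_compl t, sum_eq_zero ht, zero_add]
  have hCS : (∑ v ∈ tᶜ, f v) ^ 2 ≤ #tᶜ * ∑ v, f v ^ 2 :=
    (sq_sum_le_card_mul_sum_sq).trans <| mul_le_mul_of_nonneg_left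
      (sum_le_sum_of_subset_of_nonneg (subset_univ _) fun _ _ _ => sq_nonneg _) (by positivity)
  have hcard : (#t : ℝ) + #tᶜ = Fintype.card V := by exact_mod_cast card_add_card_compl t
  calc (#t : ℝ) * ∑ v, f v ^ 2 = Fintype.card V * ∑ v, f v ^ 2 - #tᶜ * ∑ v, f v ^ 2 := by
        rw [← hcard]; ring
    _ ≤ Fintype.card V * ∑ v, f v ^ 2 - (∑ v ∈ tᶜ, f v) ^ 2 := by linarith
    _ = Fintype.card V ^ 2 * uniformVar f := by
        rw [pow_two (Fintype.card V : ℝ), mul_assoc, card_mul_uniformVar, hsum]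
        field_simp

end UniformVar

theorem nontrivial_of_uniformVar_ne_zero {V : Type*} [Fintype V] {f : V → ℝ}
    (hf : uniformVar f ≠ 0) : Nontrivial V := by
  contrapose! hf
  cases isEmpty_or_nonempty V
  · simp [uniformVar]
  · have : Unique V := uniqueOfSubsingleton (Classical.arbitrary V)
    simp [uniformVar]

section DirichletForm

variable {V : Type*} [Fintype V] {G : SimpleGraph V} [DecidableRel G.Adj]

theorem dirichletForm_nonneg (f : V → ℝ) : 0 ≤ dirichletForm G f := by
  unfold dirichletForm
  positivity

theorem mul_uniformVar_le_dirichletForm [Nonempty V] {lam : ℝ}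
    (h : lam ∈ lowerBounds {r | ∃ f : V → ℝ, uniformVar f ≠ 0 ∧
      r = dirichletForm G f / uniformVar f}) (f : V → ℝ) :
    lam * uniformVar f ≤ dirichletForm G f := by
  rcases eq_or_ne (uniformVar f) 0 with h0 | h0
  · rw [h0, mul_zero]
    exact dirichletForm_nonneg f
  · rw [← le_div_iff₀ ((uniformVar_nonneg f).lt_of_ne h0.symm)]
    exact h ⟨f, h0, rfl⟩

end DirichletForm

namespace SimpleGraph

variable {V : Type*} {G : SimpleGraph V}

theorem Walk.dist_penultimate_add_one {u v : V} {p : G.Walk u v}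
    (hp : p.length = G.dist u v) (hnil : ¬p.Nil) :
    G.dist u p.penultimate + 1 = G.dist u v := by
  have hadj := p.adj_penultimate hnil
  have hle : G.dist u p.penultimate + 1 ≤ p.length := by
    have := dist_le p.dropLast
    have := p.length_dropLast_add_one hnil
    omega
  have hge := hadj.reachable.dist_triangle_right u
  rw [dist_eq_one_iff_adj.mpr hadj] at hge
  omega

theorem Reachable.exists_adj_dist_add_one {u v : V} (hr : G.Reachable u v) (hne : u ≠ v) :
    ∃ w, G.Adj w v ∧ G.dist u w + 1 = G.dist u v := by
  obtain ⟨p, hp⟩ := hr.exists_walk_length_eq_dist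
  have hnil : ¬p.Nil := by
    rw [← Walk.length_eq_zero_iff, hp]
    exact (hr.pos_dist_of_ne hne).ne'
  exact ⟨_, p.adj_penultimate hnil, p.dist_penultimate_add_one hp hnil⟩

theorem Walk.IsPath.length_eq_dist_of_isAcyclic (hG : G.IsAcyclic) {u v : V} {p : G.Walk u v}
    (hp : p.IsPath) : p.length = G.dist u v := by
  obtain ⟨q, hq, hql⟩ := p.reachable.exists_path_of_dist
  rw [← hql, Subtype.mk.inj ((hG.subsingleton_path u v).elim ⟨p, hp⟩ ⟨q, hq⟩)]

theorem IsTree.eq_of_adj_of_dist_add_one (hG : G.IsTree) {o v w w' : V} (h : G.Adj w v)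
    (h' : G.Adj w' v) (hd : G.dist o w + 1 = G.dist o v)
    (hd' : G.dist o w' + 1 = G.dist o v) : w = w' := by
  obtain ⟨p, -, hp⟩ := (hG.connected o w).exists_path_of_dist
  obtain ⟨p', -, hp'⟩ := (hG.connected o w').exists_path_of_dist
  have hpath := (p.concat h).isPath_of_length_eq_dist (by rw [Walk.length_concat, hp, hd])
  have hpath' := (p'.concat h').isPath_of_length_eq_dist (by rw [Walk.length_concat, hp', hd'])
  obtain ⟨hw, -⟩ := Walk.concat_inj <|
    Subtype.mk.inj ((hG.isAcyclic.subsingleton_path o v).elim ⟨_, hpath⟩ ⟨_, hpath'⟩)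
  exact hw

open Classical in
noncomputable def parent (G : SimpleGraph V) (o v : V) : V :=
  if h : ∃ w, G.Adj w v ∧ G.dist o w + 1 = G.dist o v then h.choose else o

theorem Connected.parent_spec (hG : G.Connected) {o v : V} (hv : v ≠ o) :
    G.Adj (G.parent o v) v ∧ G.dist o (G.parent o v) + 1 = G.dist o v := by
  have h := (hG o v).exists_adj_dist_add_one hv.symm
  rw [parent, dif_pos h]
  exact h.choose_spec

theorem IsTree.eq_parent (hG : G.IsTree) {o v w : V} (h : G.Adj w v)
    (hd : G.dist o w + 1 = G.dist o v) : w = G.parent o v := by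
  have hv : v ≠ o := by
    rintro rfl
    simp at hd
  obtain ⟨h', hd'⟩ := hG.connected.parent_spec hv
  exact hG.eq_of_adj_of_dist_add_one h h' hd hd'

theorem IsTree.adj_iff_eq_parent (hG : G.IsTree) {o x y : V} :
    G.Adj x y ↔ (x ≠ o ∧ y = G.parent o x) ∨ (y ≠ o ∧ x = G.parent o y) := by
  constructor
  · intro h
    rcases hG.dist_eq_dist_add_one_of_adj o h with hd | hd
    · refine .inl ⟨?_, hG.eq_parent h.symm hd.symm⟩
      rintro rfl
      simp at hd
    · refine .inr ⟨?_, hG.eq_parent h hd.symm⟩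
      rintro rfl
      simp at hd
  · rintro (⟨hx, rfl⟩ | ⟨hy, rfl⟩)
    · exact (hG.connected.parent_spec hx).1.symm
    · exact (hG.connected.parent_spec hy).1

theorem Connected.parent_induction (hG : G.Connected) (o : V) {P : V → Prop} (root : P o)
    (step : ∀ v, v ≠ o → P (G.parent o v) → P v) (v : V) : P v := by
  suffices ∀ n v, G.dist o v = n → P v from this _ v rfl
  intro n
  induction n with
  | zero =>
    intro v hv
    rwa [← (hG.dist_eq_zero_iff.mp hv)]
  | succ n ih =>
    intro v hv
    have hvo : v ≠ o := by
      rintro rfl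
      simp at hv
    exact step v hvo (ih _ (by have := (hG.parent_spec hvo).2; omega))

theorem IsTree.parent_mem_of_induce_connected (hG : G.IsTree) {o v : V} {S : Set V}
    (hS : (G.induce S).Connected) (ho : o ∈ S) (hv : v ∈ S) (hvo : v ≠ o) :
    G.parent o v ∈ S := by
  classical
  obtain ⟨W⟩ := hS.preconnected ⟨o, ho⟩ ⟨v, hv⟩
  set P : G.Walk o v := (W.map (Embedding.induce S).toHom).bypass
  have hP : P.length = G.dist o v :=
    (W.map _).bypass_isPath.length_eq_dist_of_isAcyclic hG.isAcyclic
  have hnil : ¬P.Nil := by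
    rw [← Walk.length_eq_zero_iff, hP]
    exact ((hG.connected o v).pos_dist_of_ne hvo.symm).ne'
  rw [← hG.eq_parent (P.adj_penultimate hnil) (P.dist_penultimate_add_one hP hnil)]
  have hmem := (W.map _).support_bypass_subset_support (P.getVert_mem_support (P.length - 1))
  rw [Walk.support_map, List.mem_map] at hmem
  obtain ⟨x, -, hx⟩ := hmem
  simp [← hx]

variable [Fintype V] [DecidableEq V]

theorem ne_of_mem_pathE {o v u : V} (hu : u ∈ pathE G o v) : u ≠ o :=
  (mem_filter.mp hu).2.1

theorem Connected.pathE_self (hG : G.Connected) (o : V) : pathE G o o = ∅ := by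
  ext u
  simp only [pathE, mem_filter, mem_univ, true_and, dist_self, Nat.add_eq_zero_iff,
    notMem_empty, iff_false, not_and]
  exact fun hu hd _ => hu (hG.dist_eq_zero_iff.mp hd).symm

theorem Connected.notMem_pathE_parent (hG : G.Connected) {o v : V} (hv : v ≠ o) :
    v ∉ pathE G o (G.parent o v) := by
  have := (hG.parent_spec hv).2
  simp only [pathE, mem_filter, mem_univ, true_and, not_and]
  omega

theorem IsTree.pathE_eq_insert_parent (hG : G.IsTree) {o v : V} (hv : v ≠ o) :
    pathE G o v = insert v (pathE G o (G.parent o v)) := by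
  obtain ⟨hadj, hd⟩ := hG.connected.parent_spec hv
  have hpv : G.dist (G.parent o v) v = 1 := dist_eq_one_iff_adj.mpr hadj
  ext u
  simp only [pathE, mem_insert, mem_filter, mem_univ, true_and]
  constructor
  · rintro ⟨hu, hdu⟩
    rcases eq_or_ne u v with rfl | huv
    · exact .inl rfl
    obtain ⟨w, hw, hdw⟩ := Reachable.exists_adj_dist_add_one (hG.connected u v) huv
    have := hG.connected.dist_triangle (u := o) (v := u) (w := w)
    have := hw.reachable.dist_triangle_right o
    rw [dist_eq_one_iff_adj.mpr hw] at this
    obtain rfl := hG.eq_parent (o := o) hw (by omega)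
    exact .inr ⟨hu, by omega⟩
  · rintro (rfl | ⟨hu, hdu⟩)
    · exact ⟨hv, by simp⟩
    · have := hG.connected.dist_triangle (u := o) (v := u) (w := v)
      have := hG.connected.dist_triangle (u := u) (v := G.parent o v) (w := v)
      exact ⟨hu, by omega⟩

theorem IsTree.sum_pathE_of_ne {M : Type*} [AddCommMonoid M] (hG : G.IsTree) (g : V → M)
    {o v : V} (hv : v ≠ o) :
    ∑ u ∈ pathE G o v, g u = ∑ u ∈ pathE G o (G.parent o v), g u + g v := by
  rw [hG.pathE_eq_insert_parent hv, sum_insert (hG.connected.notMem_pathE_parent hv), add_comm]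

theorem IsTree.sum_pathE_sub_parent {M : Type*} [AddCommGroup M] (hG : G.IsTree) (h : V → M)
    (o v : V) : ∑ u ∈ pathE G o v, (h u - h (G.parent o u)) = h v - h o := by
  induction v using hG.connected.parent_induction o with
  | root => simp [hG.connected.pathE_self]
  | step v hv ih => rw [hG.sum_pathE_of_ne _ hv, ih, sub_add_sub_cancel']

theorem IsTree.pathE_subset_of_induce_connected (hG : G.IsTree) {o v : V} {S : Finset V}
    (hS : (G.induce (S : Set V)).Connected) (ho : o ∈ S) (hv : v ∈ S) : pathE G o v ⊆ S := by
  induction v using hG.connected.parent_induction o with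
  | root => simp [hG.connected.pathE_self]
  | step v hvo ih =>
    rw [hG.pathE_eq_insert_parent hvo]
    exact insert_subset hv (ih (hG.parent_mem_of_induce_connected hS ho hv hvo))

theorem IsTree.sum_sum_neighborFinset {M : Type*} [AddCommMonoid M] [DecidableRel G.Adj]
    (hG : G.IsTree) (o : V) (F : V → V → M) :
    ∑ x, ∑ y ∈ G.neighborFinset x, F x y =
      ∑ x ∈ univ.filter (· ≠ o), (F x (G.parent o x) + F (G.parent o x) x) := by
  have split : ∀ x y, (if G.Adj x y then F x y else 0) =
      (if x ≠ o ∧ y = G.parent o x then F x y else 0) +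
        (if y ≠ o ∧ x = G.parent o y then F x y else 0) := by
    intro x y
    by_cases hxy : x ≠ o ∧ y = G.parent o x
    · have hyx : ¬(y ≠ o ∧ x = G.parent o y) := by
        rintro ⟨hy, rfl⟩
        have := (hG.connected.parent_spec hy).2
        have := (hG.connected.parent_spec hxy.1).2
        rw [← hxy.2] at this
        omega
      rw [if_pos (hG.adj_iff_eq_parent.mpr (.inl hxy)), if_pos hxy, if_neg hyx, add_zero]
    · simp [hG.adj_iff_eq_parent (o := o), hxy]
  simp only [neighborFinset_eq_filter, sum_filter, split, sum_add_distrib]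
  rw [sum_comm (f := fun x y => if y ≠ o ∧ x = G.parent o y then F x y else 0)]
  simp [ite_and]

theorem IsTree.dirichletForm_eq [DecidableRel G.Adj] (hG : G.IsTree) (o : V) (f : V → ℝ) :
    dirichletForm G f =
      (∑ u ∈ univ.filter (· ≠ o), (f u - f (G.parent o u)) ^ 2) / Fintype.card V := by
  have hsum : ∑ u ∈ univ.filter (· ≠ o), ((f u - f (G.parent o u)) ^ 2 +
      (f (G.parent o u) - f u) ^ 2) =
        2 * ∑ u ∈ univ.filter (· ≠ o), (f u - f (G.parent o u)) ^ 2 := by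
    rw [mul_sum]
    exact sum_congr rfl fun _ _ => by ring
  rw [dirichletForm, hG.sum_sum_neighborFinset o, hsum, mul_div_mul_left _ _ two_ne_zero]

theorem IsTree.card_mul_dirichletForm_sum_pathE [DecidableRel G.Adj] (hG : G.IsTree) (o : V)
    (g : V → ℝ) :
    Fintype.card V * dirichletForm G (fun v => ∑ u ∈ pathE G o v, g u) =
      ∑ u ∈ univ.filter (· ≠ o), g u ^ 2 := by
  have : Nonempty V := ⟨o⟩
  rw [hG.dirichletForm_eq o, mul_div_cancel₀ _ (by positivity)]
  exact sum_congr rfl fun u hu => by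
    rw [hG.sum_pathE_of_ne g (mem_filter.mp hu).2, add_sub_cancel_left]

def HardyIneq (G : SimpleGraph V) (o : V) (S : Finset V) (A : ℝ) : Prop :=
  ∀ g : V → ℝ, ∑ v ∈ S, (∑ u ∈ pathE G o v, g u) ^ 2 ≤ A * ∑ u ∈ S.filter (· ≠ o), g u ^ 2

theorem HardyIneq.one_le {o u : V} {S : Finset V} {A : ℝ} (h : HardyIneq G o S A) (hu : u ∈ S)
    (huo : u ≠ o) : 1 ≤ A := by
  have hu' : u ∈ pathE G o u := by simp [pathE, huo]
  set g : V → ℝ := fun w => if w = u then 1 else 0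
  have hlhs : 1 ≤ ∑ v ∈ S, (∑ w ∈ pathE G o v, g w) ^ 2 :=
    calc 1 = (∑ w ∈ pathE G o u, g w) ^ 2 := by simp [g, hu']
      _ ≤ _ := single_le_sum (f := fun v => (∑ w ∈ pathE G o v, g w) ^ 2)
          (fun _ _ => sq_nonneg _) hu
  have hrhs : ∑ w ∈ S.filter (· ≠ o), g w ^ 2 = 1 := by simp [g, hu, huo]
  have := h g
  rw [hrhs, mul_one] at this
  linarith

theorem IsTree.uniformVar_le_mul_dirichletForm [DecidableRel G.Adj] (hG : G.IsTree) {o : V}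
    {T T' : Finset V} (hint : T ∩ T' = {o}) (huni : T ∪ T' = univ) {A : ℝ}
    (hT : HardyIneq G o T A) (hT' : HardyIneq G o T' A) (f : V → ℝ) :
    uniformVar f ≤ A * dirichletForm G f := by
  have : Nonempty V := ⟨o⟩
  have hn : (0 : ℝ) < Fintype.card V := by positivity
  set g : V → ℝ := fun u => f u - f (G.parent o u)
  have hpath : ∀ v, f v - f o = ∑ u ∈ pathE G o v, g u := fun v =>
    (hG.sum_pathE_sub_parent f o v).symm
  refine le_of_mul_le_mul_left ?_ hn
  calc Fintype.card V * uniformVar f ≤ ∑ v, (f v - f o) ^ 2 :=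
        card_mul_uniformVar_le_sum_sq_sub f (f o)
    _ = ∑ v ∈ T, (∑ u ∈ pathE G o v, g u) ^ 2 + ∑ v ∈ T', (∑ u ∈ pathE G o v, g u) ^ 2 := by
        rw [sum_eq_add_of_inter_eq_singleton hint huni (by simp)]
        simp only [hpath]
    _ ≤ A * ∑ u ∈ T.filter (· ≠ o), g u ^ 2 + A * ∑ u ∈ T'.filter (· ≠ o), g u ^ 2 :=
        add_le_add (hT g) (hT' g)
    _ = Fintype.card V * (A * dirichletForm G f) := by
        rw [hG.dirichletForm_eq o, ← mul_add,
          ← sum_filter_ne_eq_add_of_inter_eq_singleton hint huni]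
        field_simp
        rfl

theorem IsTree.hardyIneq_of_mul_uniformVar_le [DecidableRel G.Adj] (hG : G.IsTree) {o : V}
    {S S' : Finset V} (hS : (G.induce (S : Set V)).Connected)
    (hS' : (G.induce (S' : Set V)).Connected) (hint : S ∩ S' = {o}) (huni : S ∪ S' = univ)
    {δ lam : ℝ} (hδ : 0 < δ) (hlam : 0 < lam) (hcard : δ * Fintype.card V ≤ #S')
    (hgap : ∀ f, lam * uniformVar f ≤ dirichletForm G f) :
    HardyIneq G o S (δ * lam)⁻¹ := by
  intro g
  have : Nonempty V := ⟨o⟩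
  have hn : (0 : ℝ) < Fintype.card V := by positivity
  have ho : o ∈ S ∩ S' := hint ▸ mem_singleton_self o
  set g₀ : V → ℝ := fun u => if u ∈ S.filter (· ≠ o) then g u else 0
  set f : V → ℝ := fun v => ∑ u ∈ pathE G o v, g₀ u
  have hfS : ∀ v ∈ S, f v = ∑ u ∈ pathE G o v, g u := by
    refine fun v hv => sum_congr rfl fun u hu => ?_
    have huS := hG.pathE_subset_of_induce_connected hS (mem_inter.mp ho).1 hv hu
    simp [g₀, huS, ne_of_mem_pathE hu]
  have hfS' : ∀ v ∈ S', f v = 0 := by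
    refine fun v hv => sum_eq_zero fun u hu => ?_
    have huS' := hG.pathE_subset_of_induce_connected hS' (mem_inter.mp ho).2 hv hu
    have : u ∉ S.filter (· ≠ o) := fun huS => ne_of_mem_pathE hu <| mem_singleton.mp <|
      hint ▸ mem_inter.mpr ⟨(mem_filter.mp huS).1, huS'⟩
    simp only [g₀, if_neg this]
  have hE : Fintype.card V * dirichletForm G f = ∑ u ∈ S.filter (· ≠ o), g u ^ 2 := by
    calc Fintype.card V * dirichletForm G f = ∑ u ∈ univ.filter (· ≠ o), g₀ u ^ 2 :=
          hG.card_mul_dirichletForm_sum_pathE o g₀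
      _ = ∑ u ∈ S.filter (· ≠ o), g₀ u ^ 2 :=
          (sum_subset (by intro; simp_all) fun u _ hu => by
            simp only [g₀, if_neg hu]; norm_num).symm
      _ = ∑ u ∈ S.filter (· ≠ o), g u ^ 2 :=
          sum_congr rfl fun u hu => by simp only [g₀, if_pos hu]
  have hsq : ∑ v, f v ^ 2 = ∑ v ∈ S, (∑ u ∈ pathE G o v, g u) ^ 2 := by
    have hS'zero : ∑ v ∈ S', f v ^ 2 = 0 := sum_eq_zero fun v hv => by simp [hfS' v hv]
    rw [sum_eq_add_of_inter_eq_singleton hint huni (by simp [hfS' o (mem_inter.mp ho).2]),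
      hS'zero, add_zero]
    exact sum_congr rfl fun v hv => by rw [hfS v hv]
  have hvar : δ * ∑ v, f v ^ 2 ≤ Fintype.card V * uniformVar f := by
    refine le_of_mul_le_mul_left ?_ hn
    have := mul_le_mul_of_nonneg_right hcard (sum_nonneg fun v _ => sq_nonneg (f v) :
      0 ≤ ∑ v, f v ^ 2)
    linarith [card_mul_sum_sq_le_card_sq_mul_uniformVar hfS']
  rw [← hsq, ← hE, inv_mul_eq_div, le_div_iff₀ (by positivity)]
  calc (∑ v, f v ^ 2) * (δ * lam) = lam * (δ * ∑ v, f v ^ 2) := by ring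
    _ ≤ lam * (Fintype.card V * uniformVar f) := by gcongr
    _ = Fintype.card V * (lam * uniformVar f) := by ring
    _ ≤ Fintype.card V * dirichletForm G f := by gcongr; exact hgap f

end SimpleGraph

/-- If the root `o` of a finite tree is a `δ`-center of mass witnessed by subtrees
`T`, `T̃` meeting only in `o`, and `A` is the smallest constant for which the Hardy
inequalities hold on both `T` and `T̃`, then the spectral gap `λ` of the simple random
walk (the minimum of the Rayleigh quotient `E(f)/Var(f)`) satisfies
`1/A ≤ λ ≤ 1/(δA)`. -/
theorem spectral_gap_hardy_bounds {V : Type*} [Fintype V] [DecidableEq V]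
    (G : SimpleGraph V) [DecidableRel G.Adj] (hG : G.IsTree) (o : V)
    (δ : ℝ) (hδ0 : 0 < δ) (T T' : Finset V)
    (hTconn : (G.induce (T : Set V)).Connected)
    (hT'conn : (G.induce (T' : Set V)).Connected)
    (hint : T ∩ T' = {o}) (huni : T ∪ T' = Finset.univ)
    (hTcard : δ * Fintype.card V ≤ T.card) (hT'card : δ * Fintype.card V ≤ T'.card)
    (A : ℝ)
    (hA : IsLeast {A' : ℝ |
      (∀ g : V → ℝ, ∑ v ∈ T, (∑ u ∈ pathE G o v, g u) ^ 2 ≤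
          A' * ∑ u ∈ T.filter fun u => u ≠ o, (g u) ^ 2) ∧
      (∀ g : V → ℝ, ∑ v ∈ T', (∑ u ∈ pathE G o v, g u) ^ 2 ≤
          A' * ∑ u ∈ T'.filter fun u => u ≠ o, (g u) ^ 2)} A)
    (lam : ℝ)
    (hlam : IsLeast {r : ℝ | ∃ f : V → ℝ, uniformVar f ≠ 0 ∧
        r = dirichletForm G f / uniformVar f} lam) :
    1 / A ≤ lam ∧ lam ≤ 1 / (δ * A) := by
  have : Nonempty V := ⟨o⟩
  obtain ⟨⟨f₀, hf₀, hlam_eq⟩, hlam_le⟩ := hlam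
  have hgap := mul_uniformVar_le_dirichletForm hlam_le
  have : Nontrivial V := nontrivial_of_uniformVar_ne_zero hf₀
  obtain ⟨u, hu⟩ := exists_ne o
  have hA1 : 1 ≤ A := by
    rcases mem_union.mp (huni ▸ mem_univ u) with huT | huT'
    · exact SimpleGraph.HardyIneq.one_le hA.1.1 huT hu
    · exact SimpleGraph.HardyIneq.one_le hA.1.2 huT' hu
  have hlow : 1 / A ≤ lam := by
    rw [hlam_eq, div_le_div_iff₀ (by positivity) ((uniformVar_nonneg f₀).lt_of_ne hf₀.symm)]
    linarith [hG.uniformVar_le_mul_dirichletForm hint huni hA.1.1 hA.1.2 f₀]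
  have hlam0 : 0 < lam := lt_of_lt_of_le (by positivity) hlow
  have hA_le : A ≤ (δ * lam)⁻¹ := hA.2
    ⟨hG.hardyIneq_of_mul_uniformVar_le hTconn hT'conn hint huni hδ0 hlam0 hT'card hgap,
      hG.hardyIneq_of_mul_uniformVar_le hT'conn hTconn (inter_comm T T' ▸ hint)
        (union_comm T T' ▸ huni) hδ0 hlam0 hTcard hgap⟩
  refine ⟨hlow, ?_⟩
  rw [le_div_iff₀ (by positivity)]
  calc lam * (δ * A) = δ * lam * A := by ring
    _ ≤ δ * lam * (δ * lam)⁻¹ := by gcongr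
    _ = 1 := mul_inv_cancel₀ (by positivity)
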